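/- Fix integers T ≥ 1, m ≥ 1, d ≥ 1, a real L ≥ 1 with L ≤ d, and δ ∈ (0,1). Set C := 5d/L and η := 1/(100·m·d·√(T·ln(T²/δ))). Let ρ ∈ (0,L] satisfy ρ ≥ T^{−1/8}·L·√(20m). For t ∈ {1,…,T+1} let K_t ⊆ { q ∈ ℝ^d : 0 ≤ q_j ≤ 1 for all j, Σ_j q_j ≤ L } be nonempty closed convex sets, and for t ∈ {1,…,T} let r_t ∈ [0,1]^d and let G_t ∈ ℝ^{d×m} have all entries in [−1,1]. Suppose there exists q° ∈ ⋂_t K_t with (G_tᵀq°)_i ≤ −ρ for all t ∈ {1,…,T} and all i ∈ {1,…,m}. Define the coupled iterates: q̂_1 ∈ K_1, λ_1 = 0 ∈ ℝ^m; for each t, ℓ_t := G_t λ_t − r_t, ℓ̄_t := max_{τ ≤ t} ‖ℓ_τ‖_∞ (assumed positive for all t), η_t := 1/(ℓ̄_t C √T), q̂_{t+1} := Π_{K_{t+1}}(q̂_t − η_t ℓ_t), and λ_{t+1} := Π_{[0,T^{1/4}]^m}(λ_t + η·G_tᵀq̂_t). Then ‖λ_t‖₁ ≤ 20·m·L²/ρ²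 for every t ∈ {1,…,T+1}. -/

import Mathlib

open Finset Matrix

/-- The ℓ₁ norm on `ℝ^d`. -/
noncomputable def l1 {d : ℕ} (x : Fin d → ℝ) : ℝ := ∑ i, |x i|

/-- The ℓ∞ norm on `ℝ^d`. -/
noncomputable def linf {d : ℕ} (x : Fin d → ℝ) : ℝ := ⨆ i, |x i|

/-- Dot product on `ℝ^d`. -/
noncomputable def dotp {d : ℕ} (x y : Fin d → ℝ) : ℝ := ∑ i, x i * y i

/-- Squared Euclidean distance on `ℝ^d`. -/
noncomputable def sqdist {d : ℕ} (x y : Fin d → ℝ) : ℝ := ∑ i, (x i - y i) ^ 2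

/-- `z` is the Euclidean (metric) projection of `p` onto `K`. -/
def IsEuclidProj {d : ℕ} (K : Set (Fin d → ℝ)) (p z : Fin d → ℝ) : Prop :=
  z ∈ K ∧ ∀ y ∈ K, sqdist z p ≤ sqdist y p

/-- `intervalMax ℓ a b = max_{a ≤ t ≤ b} ‖ℓ_t‖_∞` (as the supremum of a finite nonempty set
of reals, for `a ≤ b`). -/
noncomputable def intervalMax {d : ℕ} (ℓ : ℕ → Fin d → ℝ) (a b : ℕ) : ℝ :=
  sSup ((fun t => linf (ℓ t)) '' Set.Icc a b)

/-!
Since `‖λ‖₁ ≤ √m ‖λ‖₂`, it suffices to show `‖λ_t‖₂ ≤ B := 20 √m L² / ρ²`. For `T ≤ 1` the box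
`[0, T^{1/4}]^m` alone gives `‖λ_t‖₁ ≤ m`; for `T ≥ 2` we have `log (T² / δ) ≥ 1`, hence
`η m d √T ≤ 1/100`.

Dual ascent and the strictly feasible `q°` give the drift inequality
`‖λ_{t+1}‖₂² ≤ ‖λ_t‖₂² + 2η ⟪ℓ_t, q̂_t - q°⟫ - 2ηρ ‖λ_t‖₁ + O(η L)`, and the projected primal step
bounds `2 ⟪ℓ_t, q̂_t - q°⟫` by `a_t (‖q̂_t - q°‖² - ‖q̂_{t+1} - q°‖²) + d ℓ̄_t² / a_t`, where
`a_t = ℓ̄_t C √T`. Assume `‖λ‖₂ ≤ B` up to time `u` and let `t₀ ≤ u` be the last time with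
`‖λ_{t₀}‖₂ ≤ B / 2`. Summing the drift over `[t₀, u]`, the distance terms telescope to at most
`2 L a_u` because `a_t` is nondecreasing, the gain `2ηρ Σ ‖λ_τ‖₁ ≥ ηρ (u - t₀) B` absorbs the
`O(η L)` terms, and `ℓ̄_u ≤ max ‖λ_τ‖₁ + 1 ≤ √m B + 1` keeps the rest below `3 B² / 4`; hence
`‖λ_{u+1}‖₂ ≤ B`.
-/

noncomputable def l2 {n : ℕ} (x : Fin n → ℝ) : ℝ := √(∑ i, x i ^ 2)

section Vectors

variable {n : ℕ}

lemma l1_nonneg (x : Fin n → ℝ) : 0 ≤ l1 x := sum_nonneg fun _ _ => abs_nonneg _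

lemma l2_nonneg (x : Fin n → ℝ) : 0 ≤ l2 x := Real.sqrt_nonneg _

lemma l2_sq (x : Fin n → ℝ) : l2 x ^ 2 = ∑ i, x i ^ 2 :=
  Real.sq_sqrt (sum_nonneg fun _ _ => sq_nonneg _)

lemma dotp_le_l2_mul_l2 (x y : Fin n → ℝ) : dotp x y ≤ l2 x * l2 y :=
  Real.sum_mul_le_sqrt_mul_sqrt _ _ _

lemma l2_le_l1 (x : Fin n → ℝ) : l2 x ≤ l1 x := by
  refine Real.sqrt_le_iff.2 ⟨l1_nonneg x, ?_⟩
  simpa only [l1, sq_abs] using sum_sq_le_sq_sum_of_nonneg fun i _ => abs_nonneg (x i)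

lemma l1_le_sqrt_card_mul_l2 (x : Fin n → ℝ) : l1 x ≤ √n * l2 x := by
  simpa [l1, l2] using Real.sum_mul_le_sqrt_mul_sqrt univ (fun _ => (1 : ℝ)) fun i => |x i|

lemma l1_le_card_mul {x : Fin n → ℝ} {c : ℝ} (hx : ∀ i, |x i| ≤ c) : l1 x ≤ n * c := by
  simpa [l1] using sum_le_card_nsmul univ (fun i => |x i|) c fun i _ => hx i

lemma sum_sq_le_card_mul_sq {x : Fin n → ℝ} {c : ℝ} (hx : ∀ i, |x i| ≤ c) :
    ∑ i, x i ^ 2 ≤ n * c ^ 2 := by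
  simpa using sum_le_card_nsmul univ (fun i => x i ^ 2) (c ^ 2) fun i _ =>
    sq_le_sq' (abs_le.1 (hx i)).1 (abs_le.1 (hx i)).2

lemma abs_mulVec_le_l1 {k : ℕ} {A : Matrix (Fin k) (Fin n) ℝ} (hA : ∀ j i, |A j i| ≤ 1)
    (v : Fin n → ℝ) (j : Fin k) : |(A *ᵥ v) j| ≤ l1 v :=
  (abs_sum_le_sum_abs (fun i => A j i * v i) univ).trans <| sum_le_sum fun i _ => by
    rw [abs_mul]; exact mul_le_of_le_one_left (abs_nonneg _) (hA j i)

lemma l1_eq_sum_of_nonneg {x : Fin n → ℝ} (hx : ∀ i, 0 ≤ x i) : l1 x = ∑ i, x i :=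
  sum_congr rfl fun i _ => abs_of_nonneg (hx i)

lemma sqdist_nonneg (x y : Fin n → ℝ) : 0 ≤ sqdist x y := sum_nonneg fun _ _ => sq_nonneg _

lemma sqdist_le_sum_add_sum {x y : Fin n → ℝ} (hx : ∀ j, 0 ≤ x j ∧ x j ≤ 1)
    (hy : ∀ j, 0 ≤ y j ∧ y j ≤ 1) : sqdist x y ≤ ∑ j, x j + ∑ j, y j := by
  rw [← sum_add_distrib]
  refine sum_le_sum fun j _ => ?_
  nlinarith [hx j, hy j, mul_nonneg (hx j).1 (hy j).1]

lemma sqdist_add_mul (x g c : Fin n → ℝ) (γ : ℝ) :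
    sqdist (fun j => x j + γ * g j) c
      = sqdist x c + 2 * γ * dotp g (fun j => x j - c j) + γ ^ 2 * ∑ j, g j ^ 2 := by
  simp only [sqdist, dotp, mul_sum, ← sum_add_distrib]
  exact sum_congr rfl fun j _ => by ring

lemma nonneg_of_forall_mul_add_sq_nonneg {a b : ℝ}
    (h : ∀ θ, 0 < θ → θ ≤ 1 → 0 ≤ a * θ + b * θ ^ 2) : 0 ≤ a := by
  by_contra! ha
  set θ := min 1 (-a / (|b| + 1))
  have hθ : 0 < θ := lt_min one_pos (div_pos (neg_pos.2 ha) (by positivity))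
  have hθb : θ * (|b| + 1) ≤ -a := (le_div_iff₀ (by positivity)).1 (min_le_right _ _)
  have := h θ hθ (min_le_left _ _)
  nlinarith [le_abs_self b, abs_nonneg b]

lemma IsEuclidProj.sqdist_le {K : Set (Fin n → ℝ)} (hK : Convex ℝ K) {p z c : Fin n → ℝ}
    (hz : IsEuclidProj K p z) (hc : c ∈ K) : sqdist z c ≤ sqdist p c := by
  obtain ⟨hzK, hmin⟩ := hz
  -- first-order optimality of `z` along the segment towards `c`
  have hvar : 0 ≤ dotp (fun j => c j - z j) (fun j => z j - p j) := by
    suffices 0 ≤ 2 * dotp (fun j => c j - z j) (fun j => z j - p j) by linarith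
    refine nonneg_of_forall_mul_add_sq_nonneg (b := ∑ j, (c j - z j) ^ 2) fun θ hθ0 hθ1 => ?_
    have hmem : (fun j => z j + θ * (c j - z j)) ∈ K :=
      hK.add_smul_sub_mem hzK hc ⟨hθ0.le, hθ1⟩
    have := hmin _ hmem
    rw [sqdist_add_mul] at this
    linarith
  have hsplit : sqdist p c = sqdist z c + 2 * dotp (fun j => c j - z j) (fun j => z j - p j)
      + sqdist p z := by
    simp only [sqdist, dotp, mul_sum, ← sum_add_distrib]
    exact sum_congr rfl fun j _ => by ring
  linarith [sqdist_nonneg p z]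

lemma IsEuclidProj.sqdist_le_add {K : Set (Fin n → ℝ)} (hK : Convex ℝ K) {x g z c : Fin n → ℝ}
    {γ : ℝ} (hz : IsEuclidProj K (fun j => x j + γ * g j) z) (hc : c ∈ K) :
    sqdist z c ≤ sqdist x c + 2 * γ * dotp g (fun j => x j - c j) + γ ^ 2 * ∑ j, g j ^ 2 :=
  sqdist_add_mul x g c γ ▸ hz.sqdist_le hK hc

lemma IsEuclidProj.two_mul_dotp_le {K : Set (Fin n → ℝ)} (hK : Convex ℝ K) {x g z c : Fin n → ℝ}
    {a : ℝ} (ha : 0 < a) (hz : IsEuclidProj K (fun j => x j - 1 / a * g j) z) (hc : c ∈ K) :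
    2 * dotp g (fun j => x j - c j) ≤ a * (sqdist x c - sqdist z c) + (∑ j, g j ^ 2) / a := by
  have h := IsEuclidProj.sqdist_le_add (γ := -(1 / a)) hK (by simpa [sub_eq_add_neg] using hz) hc
  have e : a * (sqdist x c + 2 * -(1 / a) * dotp g (fun j => x j - c j)
      + (-(1 / a)) ^ 2 * ∑ j, g j ^ 2 - sqdist z c) = a * (sqdist x c - sqdist z c)
        + (∑ j, g j ^ 2) / a - 2 * dotp g (fun j => x j - c j) := by
    field_simp
    ring
  linarith [mul_nonneg ha.le (sub_nonneg.2 h)]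

lemma IsEuclidProj.l2_sq_le {K : Set (Fin n → ℝ)} (hK : Convex ℝ K) (h0 : 0 ∈ K)
    {x g z : Fin n → ℝ} {γ : ℝ} (hz : IsEuclidProj K (fun j => x j + γ * g j) z) :
    l2 z ^ 2 ≤ l2 x ^ 2 + 2 * γ * dotp g x + γ ^ 2 * l2 g ^ 2 := by
  simpa [sqdist, l2_sq] using hz.sqdist_le_add hK h0

lemma IsEuclidProj.l2_le_add {K : Set (Fin n → ℝ)} (hK : Convex ℝ K) (h0 : 0 ∈ K)
    {x g z : Fin n → ℝ} {γ : ℝ} (hγ : 0 ≤ γ) (hz : IsEuclidProj K (fun j => x j + γ * g j) z) :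
    l2 z ≤ l2 x + γ * l2 g := by
  have h := hz.l2_sq_le hK h0
  have hcs := dotp_le_l2_mul_l2 g x
  refine (pow_le_pow_iff_left₀ (l2_nonneg z)
    (add_nonneg (l2_nonneg x) (mul_nonneg hγ (l2_nonneg g))) two_ne_zero).1 ?_
  nlinarith [mul_le_mul_of_nonneg_left hcs hγ]

lemma l2_le_sqrt_card_mul {x : Fin n → ℝ} {c : ℝ} (hx : ∀ i, |x i| ≤ c) (hc : 0 ≤ c) :
    l2 x ≤ √n * c := by
  rw [← Real.sqrt_sq hc, ← Real.sqrt_mul (Nat.cast_nonneg n)]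
  exact Real.sqrt_le_sqrt (sum_sq_le_card_mul_sq hx)

lemma convex_setOf_forall_mem_Icc (a b : ℝ) : Convex ℝ {l : Fin n → ℝ | ∀ i, l i ∈ Set.Icc a b} :=
  fun _ hx _ hy _ _ hs ht hst i => convex_Icc a b (hx i) (hy i) hs ht hst

lemma dotp_transpose_mulVec_le {k : ℕ} {G : Matrix (Fin n) (Fin k) ℝ} {lam : Fin k → ℝ}
    {r q qf : Fin n → ℝ} {ρ L : ℝ} (hlam : ∀ i, 0 ≤ lam i) (hr : ∀ j, r j ∈ Set.Icc (0 : ℝ) 1)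
    (hq : ∀ j, 0 ≤ q j) (hqL : ∑ j, q j ≤ L) (hqf : ∀ j, 0 ≤ qf j)
    (hfeas : ∀ i, (Gᵀ *ᵥ qf) i ≤ -ρ) :
    dotp (Gᵀ *ᵥ q) lam ≤ dotp (fun j => (G *ᵥ lam) j - r j) (fun j => q j - qf j)
      - ρ * l1 lam + L := by
  have hswap : ∀ p, dotp (Gᵀ *ᵥ p) lam = dotp p (G *ᵥ lam) := fun p => by
    simp only [dotp, ← dotProduct.eq_1, mulVec_transpose, dotProduct_mulVec]
  have hsplit : dotp (fun j => (G *ᵥ lam) j - r j) (fun j => q j - qf j)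
      = dotp q (G *ᵥ lam) - dotp r q - dotp qf (G *ᵥ lam) + dotp r qf := by
    simp only [dotp, ← sum_sub_distrib, ← sum_add_distrib]
    exact sum_congr rfl fun j _ => by ring
  have hfeas' : dotp (Gᵀ *ᵥ qf) lam ≤ -ρ * l1 lam := by
    rw [l1_eq_sum_of_nonneg hlam, mul_sum]
    exact sum_le_sum fun i _ => mul_le_mul_of_nonneg_right (hfeas i) (hlam i)
  have hrq : dotp r q ≤ L := (sum_le_sum fun j _ => mul_le_of_le_one_left (hq j) (hr j).2).trans hqL
  have hrqf : 0 ≤ dotp r qf := sum_nonneg fun j _ => mul_nonneg (hr j).1 (hqf j)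
  rw [hswap] at hfeas' ⊢
  linarith

end Vectors

lemma abs_le_linf {n : ℕ} (x : Fin n → ℝ) (j : Fin n) : |x j| ≤ linf x :=
  le_ciSup (f := fun i => |x i|) (Set.finite_range _).bddAbove j

section IntervalMax

variable {n : ℕ} {ℓ : ℕ → Fin n → ℝ} {a b : ℕ}

lemma le_intervalMax {τ : ℕ} (haτ : a ≤ τ) (hτb : τ ≤ b) : linf (ℓ τ) ≤ intervalMax ℓ a b :=
  le_csSup ((Set.finite_Icc a b).image _).bddAbove ⟨τ, ⟨haτ, hτb⟩, rfl⟩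

lemma intervalMax_le {c : ℝ} (hab : a ≤ b) (h : ∀ τ, a ≤ τ → τ ≤ b → linf (ℓ τ) ≤ c) :
    intervalMax ℓ a b ≤ c :=
  csSup_le ⟨_, a, ⟨le_rfl, hab⟩, rfl⟩ (by rintro _ ⟨τ, ⟨h1, h2⟩, rfl⟩; exact h τ h1 h2)

lemma monotoneOn_intervalMax : MonotoneOn (intervalMax ℓ a) (Set.Ici a) := fun _ hb _ _ hbb' =>
  csSup_le_csSup ((Set.finite_Icc _ _).image _).bddAbove ⟨_, a, ⟨le_rfl, hb⟩, rfl⟩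
    (Set.image_mono (Set.Icc_subset_Icc_right hbb'))

end IntervalMax

lemma mem_of_succ_mem {α : Type*} {x : ℕ → α} {S : ℕ → Set α} {T : ℕ} (h1 : x 1 ∈ S 1)
    (hsucc : ∀ t ∈ Icc 1 T, x (t + 1) ∈ S (t + 1)) : ∀ t ∈ Icc 1 (T + 1), x t ∈ S t := by
  intro t ht
  obtain ⟨ht1, htT⟩ := mem_Icc.1 ht
  rcases ht1.eq_or_lt with rfl | h
  · exact h1
  obtain ⟨u, rfl⟩ : ∃ u, t = u + 1 := ⟨t - 1, by omega⟩
  exact hsucc u (mem_Icc.2 ⟨by omega, by omega⟩)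

lemma le_add_sum_of_succ_le {x y : ℕ → ℝ} {s e : ℕ} (hse : s ≤ e)
    (h : ∀ τ ∈ Icc s e, x (τ + 1) ≤ x τ + y τ) : x (e + 1) ≤ x s + ∑ τ ∈ Icc s e, y τ := by
  induction e, hse using Nat.le_induction with
  | base => simpa using h s (by simp)
  | succ e hse ih =>
    rw [sum_Icc_succ_top (by omega)]
    have := ih fun τ hτ => h τ (Icc_subset_Icc_right (by omega) hτ)
    linarith [h (e + 1) (by simp; omega)]

lemma sum_mul_sub_succ_le {a D : ℕ → ℝ} {s e : ℕ} {R : ℝ} (hse : s ≤ e) (ha0 : 0 ≤ a s)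
    (ha : MonotoneOn a (Set.Icc s e)) (hD : ∀ τ ∈ Icc s e, D τ ≤ R) :
    ∑ τ ∈ Icc s e, a τ * (D τ - D (τ + 1)) ≤ a e * (R - D (e + 1)) := by
  induction e, hse using Nat.le_induction with
  | base => simpa using mul_le_mul_of_nonneg_left (sub_le_sub_right (hD s (by simp)) _) ha0
  | succ e hse ih =>
    rw [sum_Icc_succ_top (by omega)]
    have h1 := ih (ha.mono (Set.Icc_subset_Icc_right (by omega)))
      fun τ hτ => hD τ (Icc_subset_Icc_right (by omega) hτ)
    have h2 : a e ≤ a (e + 1) := ha ⟨hse, by omega⟩ ⟨by omega, le_rfl⟩ (by omega)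
    have h3 : D (e + 1) ≤ R := hD (e + 1) (by simp; omega)
    nlinarith [mul_nonneg (sub_nonneg.2 h2) (sub_nonneg.2 h3)]

lemma forall_le_of_excursion {W : ℕ → ℝ} {T : ℕ} {c B : ℝ} (hcB : c ≤ B) (h1 : W 1 ≤ c)
    (hstep : ∀ τ ∈ Icc 1 T, W τ ≤ c → W (τ + 1) ≤ B)
    (hexc : ∀ t₀ u, 1 ≤ t₀ → t₀ < u → u ≤ T → W t₀ ≤ c → (∀ τ ∈ Ioc t₀ u, c < W τ) →
      (∀ τ ∈ Icc 1 u, W τ ≤ B) → W (u + 1) ≤ B) :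
    ∀ t ∈ Icc 1 (T + 1), W t ≤ B := by
  intro t
  induction t using Nat.strong_induction_on with
  | _ t ih =>
    intro ht
    obtain ⟨ht1, htT⟩ := mem_Icc.1 ht
    rcases ht1.eq_or_lt with rfl | h
    · exact h1.trans hcB
    obtain ⟨u, rfl⟩ : ∃ u, t = u + 1 := ⟨t - 1, by omega⟩
    have hbelow : ∀ τ ∈ Icc 1 u, W τ ≤ B := fun τ hτ => by
      obtain ⟨hτ1, hτu⟩ := mem_Icc.1 hτ
      exact ih τ (by omega) (mem_Icc.2 ⟨hτ1, by omega⟩)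
    set t₀ := Nat.findGreatest (fun τ => 1 ≤ τ ∧ W τ ≤ c) u
    obtain ⟨ht₀1, ht₀c⟩ : 1 ≤ t₀ ∧ W t₀ ≤ c :=
      Nat.findGreatest_spec (P := fun τ => 1 ≤ τ ∧ W τ ≤ c) (by omega) ⟨le_rfl, h1⟩
    have habove : ∀ τ ∈ Ioc t₀ u, c < W τ := fun τ hτ => by
      obtain ⟨hlt, hle⟩ := mem_Ioc.1 hτ
      have := Nat.findGreatest_is_greatest hlt hle
      push Not at this
      exact this (by omega)
    rcases (Nat.findGreatest_le u : t₀ ≤ u).lt_or_eq with hlt | heq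
    · exact hexc t₀ u ht₀1 hlt (by omega) ht₀c habove hbelow
    · exact hstep u (mem_Icc.2 ⟨by omega, by omega⟩) (heq ▸ ht₀c)

lemma sq_le_add_of_drift {W N M D : ℕ → ℝ} {α β c κ R : ℝ} {s e : ℕ} (hse : s ≤ e)
    (hα : 0 ≤ α) (hβ : 0 ≤ β) (hM0 : 0 ≤ M s) (hM : MonotoneOn M (Set.Icc s e))
    (hD : ∀ τ ∈ Icc s e, D τ ≤ R) (hDe : 0 ≤ D (e + 1))
    (hdrift : ∀ τ ∈ Icc s e,
      W (τ + 1) ^ 2 ≤ W τ ^ 2 + α * M τ * (D τ - D (τ + 1)) + β * M τ - c * N τ + κ) :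
    W (e + 1) ^ 2 ≤ W s ^ 2 + α * M e * R + #(Icc s e) * (β * M e + κ)
      - c * ∑ τ ∈ Icc s e, N τ := by
  have hsum := le_add_sum_of_succ_le (x := fun τ => W τ ^ 2)
    (y := fun τ => α * M τ * (D τ - D (τ + 1)) + β * M τ - c * N τ + κ) hse
    fun τ hτ => by linarith [hdrift τ hτ]
  simp only [sum_add_distrib, sum_sub_distrib, sum_const, nsmul_eq_mul, ← mul_sum] at hsum
  have hMe : M s ≤ M e := hM ⟨le_rfl, hse⟩ ⟨hse, le_rfl⟩ hse
  have htel := sum_mul_sub_succ_le (a := fun τ => α * M τ) hse (mul_nonneg hα hM0)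
    (fun x hx y hy hxy => mul_le_mul_of_nonneg_left (hM hx hy hxy) hα) hD
  have hMsum : ∑ τ ∈ Icc s e, M τ ≤ #(Icc s e) * M e := by
    simpa using sum_le_card_nsmul _ _ _ fun τ hτ =>
      hM (by simpa using hτ) ⟨hse, le_rfl⟩ (mem_Icc.1 hτ).2
  nlinarith [mul_nonneg (mul_nonneg hα (hM0.trans hMe)) hDe, mul_le_mul_of_nonneg_left hMsum hβ]

theorem forall_le_of_drift {T : ℕ} {W N M D : ℕ → ℝ} {α β c κ R B μ : ℝ}
    (hα : 0 ≤ α) (hβ : 0 ≤ β) (hc : 0 ≤ c) (hκ : 0 ≤ κ) (hB : 0 ≤ B)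
    (hκB : 4 * κ ≤ c * B) (hμB : (R * α + T * β) * μ ≤ 3 * B ^ 2 / 4)
    (hW : ∀ τ, 0 ≤ W τ) (hW1 : W 1 = 0) (hWN : ∀ τ ∈ Icc 1 T, W τ ≤ N τ)
    (hM0 : ∀ τ ∈ Icc 1 T, 0 ≤ M τ) (hM : MonotoneOn M (Set.Icc 1 T))
    (hMμ : ∀ u ∈ Icc 1 T, (∀ τ ∈ Icc 1 u, W τ ≤ B) → M u ≤ μ)
    (hD : ∀ τ ∈ Icc 1 (T + 1), 0 ≤ D τ ∧ D τ ≤ R)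
    (hjump : ∀ τ ∈ Icc 1 T, W (τ + 1) ≤ W τ + B / 2)
    (hdrift : ∀ τ ∈ Icc 1 T,
      W (τ + 1) ^ 2 ≤ W τ ^ 2 + α * M τ * (D τ - D (τ + 1)) + β * M τ - c * N τ + κ) :
    ∀ t ∈ Icc 1 (T + 1), W t ≤ B := by
  refine forall_le_of_excursion (c := B / 2) (by linarith) (by rw [hW1]; linarith)
    (fun τ hτ _ => by linarith [hjump τ hτ]) ?_
  intro t₀ u ht₀ hlt huT ht₀c habove hbelow
  have hsub : Icc t₀ u ⊆ Icc 1 T := Icc_subset_Icc ht₀ huT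
  have hu : u ∈ Icc 1 T := mem_Icc.2 ⟨by omega, huT⟩
  have hR : 0 ≤ R := (hD u (by simp; omega)).1.trans (hD u (by simp; omega)).2
  have hwin := sq_le_add_of_drift (N := N) hlt.le hα hβ (hM0 t₀ (by simp; omega))
    (hM.mono (Set.Icc_subset_Icc ht₀ huT)) (fun τ hτ => (hD τ (by simp at hτ ⊢; omega)).2)
    (hD (u + 1) (by simp; omega)).1 fun τ hτ => hdrift τ (hsub hτ)
  -- during the excursion every `N τ ≥ W τ > B / 2`, except possibly at its start
  have hNsum : #(Ioc t₀ u) * (B / 2) ≤ ∑ τ ∈ Icc t₀ u, N τ := by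
    have h1 := card_nsmul_le_sum (Ioc t₀ u) N (B / 2) fun τ hτ =>
      (habove τ hτ).le.trans (hWN τ (hsub (Ioc_subset_Icc_self hτ)))
    have h2 := sum_le_sum_of_subset_of_nonneg (f := N) (Ioc_subset_Icc_self (a := t₀) (b := u))
      fun τ hτ _ => (hW τ).trans (hWN τ (hsub hτ))
    rw [nsmul_eq_mul] at h1
    linarith
  have hcard : (#(Icc t₀ u) : ℝ) = #(Ioc t₀ u) + 1 := by
    rw [Nat.card_Icc, Nat.card_Ioc]; norm_cast; omega
  have hcardT : (#(Icc t₀ u) : ℝ) ≤ T := by rw [Nat.card_Icc]; norm_cast; omega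
  have hcard1 : (1 : ℝ) ≤ #(Ioc t₀ u) := by rw [Nat.card_Ioc]; norm_cast; omega
  have hMu := hM0 u hu
  have hμ : (R * α + T * β) * M u ≤ (R * α + T * β) * μ :=
    mul_le_mul_of_nonneg_left (hMμ u hu hbelow) (by positivity)
  have hβT : β * (#(Icc t₀ u) * M u) ≤ β * (T * M u) :=
    mul_le_mul_of_nonneg_left (mul_le_mul_of_nonneg_right hcardT hMu) hβ
  have hκn : #(Icc t₀ u) * κ ≤ c * (#(Ioc t₀ u) * (B / 2)) := by rw [hcard]; nlinarith
  refine (pow_le_pow_iff_left₀ (hW _) hB two_ne_zero).1 ?_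
  nlinarith [pow_le_pow_left₀ (hW t₀) ht₀c 2, mul_le_mul_of_nonneg_left hNsum hc]

lemma one_le_log_sq_div {T : ℕ} {δ : ℝ} (hT : 2 ≤ T) (hδ0 : 0 < δ) (hδ1 : δ < 1) :
    1 ≤ Real.log ((T : ℝ) ^ 2 / δ) := by
  have hT' : (2 : ℝ) ≤ T := by exact_mod_cast hT
  rw [Real.le_log_iff_exp_le (by positivity)]
  calc Real.exp 1 ≤ 2 ^ 2 := by linarith [Real.exp_one_lt_d9]
    _ ≤ (T : ℝ) ^ 2 := by gcongr
    _ ≤ (T : ℝ) ^ 2 / δ := le_div_self (by positivity) hδ0 hδ1.le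

lemma dualStep_mul_sqrt_le {m d T : ℕ} {δ η : ℝ} (hm : 1 ≤ m) (hd : 1 ≤ d) (hT : 2 ≤ T)
    (hδ0 : 0 < δ) (hδ1 : δ < 1)
    (hη : η = 1 / (100 * m * d * √(T * Real.log ((T : ℝ) ^ 2 / δ)))) :
    η * m * d * √T ≤ 1 / 100 := by
  have hs : √(T : ℝ) ≤ √(T * Real.log ((T : ℝ) ^ 2 / δ)) :=
    Real.sqrt_le_sqrt (le_mul_of_one_le_right (Nat.cast_nonneg _) (one_le_log_sq_div hT hδ0 hδ1))
  have hT0 : 0 < √(T : ℝ) := Real.sqrt_pos.2 (by exact_mod_cast (by omega : 0 < T))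
  have hm0 : (0 : ℝ) < m := by exact_mod_cast hm
  have hd0 : (0 : ℝ) < d := by exact_mod_cast hd
  rw [hη]
  field_simp
  exact (div_le_one (hT0.trans_le hs)).2 hs

lemma twenty_mul_sqrt_le {m : ℕ} {L ρ : ℝ} (hρ0 : 0 < ρ) (hρL : ρ ≤ L) :
    20 * √m ≤ 20 * √m * L ^ 2 / ρ ^ 2 := by
  rw [mul_div_assoc, ← div_pow]
  exact le_mul_of_one_le_right (by positivity) (one_le_pow₀ ((one_le_div hρ0).2 hρL))

lemma twenty_mul_le {m : ℕ} {L ρ : ℝ} (hm : 1 ≤ m) (hρ0 : 0 < ρ) (hρL : ρ ≤ L) :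
    20 * L ≤ ρ * (20 * √m * L ^ 2 / ρ ^ 2) := by
  have hsm : 1 ≤ √(m : ℝ) := Real.one_le_sqrt.2 (by exact_mod_cast hm)
  rw [show ρ * (20 * √m * L ^ 2 / ρ ^ 2) = 20 * √m * L * (L / ρ) by field_simp]
  nlinarith [(one_le_div hρ0).2 hρL, mul_le_mul_of_nonneg_left hsm (hρ0.le.trans hρL)]

lemma two_mul_mul_add_mul_le {d T : ℕ} {L C η : ℝ} (hT : 1 ≤ T) (hL : 0 < L) (hLd : L ≤ d)
    (hC : C = 5 * d / L) (hη : 0 ≤ η) :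
    2 * L * (η * C * √T) + T * (η * d / (C * √T)) ≤ 11 * (η * d * √T) := by
  have hsT : 0 < √(T : ℝ) := Real.sqrt_pos.2 (by exact_mod_cast hT)
  have hd : (0 : ℝ) < d := hL.trans_le hLd
  have hT2 : (T : ℝ) = √T * √T := (Real.mul_self_sqrt (Nat.cast_nonneg T)).symm
  have e : 2 * L * (η * C * √T) + T * (η * d / (C * √T)) = η * √T * (10 * d + L / 5) := by
    rw [hC]; nth_rewrite 2 [hT2]; field_simp; ring
  rw [e]
  nlinarith [mul_le_mul_of_nonneg_left hLd (by positivity : 0 ≤ η * √T),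
    (by positivity : 0 ≤ η * d * √T)]

structure IsPDGDRun {d m : ℕ} (T : ℕ) (L C η ρ : ℝ) (K : ℕ → Set (Fin d → ℝ))
    (r : ℕ → Fin d → ℝ) (G : ℕ → Matrix (Fin d) (Fin m) ℝ) (qf : Fin d → ℝ)
    (qh : ℕ → Fin d → ℝ) (lam : ℕ → Fin m → ℝ) (ℓ : ℕ → Fin d → ℝ) : Prop where
  convex : ∀ t ∈ Icc 1 (T + 1), Convex ℝ (K t)
  subset : ∀ t ∈ Icc 1 (T + 1), K t ⊆ {q : Fin d → ℝ | (∀ j, 0 ≤ q j ∧ q j ≤ 1) ∧ ∑ j, q j ≤ L}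
  reward_mem : ∀ t ∈ Icc 1 T, ∀ j, r t j ∈ Set.Icc (0 : ℝ) 1
  abs_constraint_le_one : ∀ t ∈ Icc 1 T, ∀ j i, |G t j i| ≤ 1
  feasible_mem : ∀ t ∈ Icc 1 (T + 1), qf ∈ K t
  feasible : ∀ t ∈ Icc 1 T, ∀ i, ((G t)ᵀ *ᵥ qf) i ≤ -ρ
  qh_one : qh 1 ∈ K 1
  lam_one : ∀ i, lam 1 i = 0
  loss_eq : ∀ t ∈ Icc 1 T, ℓ t = fun j => (G t *ᵥ lam t) j - r t j
  intervalMax_pos : ∀ t ∈ Icc 1 T, 0 < intervalMax ℓ 1 t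
  primal_update : ∀ t ∈ Icc 1 T, IsEuclidProj (K (t + 1))
    (fun j => qh t j - (1 / (intervalMax ℓ 1 t * C * Real.sqrt T)) * ℓ t j) (qh (t + 1))
  dual_update : ∀ t ∈ Icc 1 T,
    IsEuclidProj {l : Fin m → ℝ | ∀ i, l i ∈ Set.Icc (0 : ℝ) ((T : ℝ) ^ ((1 : ℝ) / 4))}
      (fun i => lam t i + η * ((G t)ᵀ *ᵥ qh t) i) (lam (t + 1))

namespace IsPDGDRun

variable {d m T : ℕ} {L C η ρ : ℝ} {K : ℕ → Set (Fin d → ℝ)} {r : ℕ → Fin d → ℝ}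
  {G : ℕ → Matrix (Fin d) (Fin m) ℝ} {qf : Fin d → ℝ} {qh : ℕ → Fin d → ℝ}
  {lam : ℕ → Fin m → ℝ} {ℓ : ℕ → Fin d → ℝ}

lemma lam_mem (h : IsPDGDRun T L C η ρ K r G qf qh lam ℓ) :
    ∀ t ∈ Icc 1 (T + 1), ∀ i, lam t i ∈ Set.Icc (0 : ℝ) ((T : ℝ) ^ ((1 : ℝ) / 4)) :=
  mem_of_succ_mem (x := lam) (S := fun _ => {l | ∀ i, l i ∈ Set.Icc _ _})
    (fun i => by rw [h.lam_one]; exact ⟨le_rfl, by positivity⟩) fun t ht => (h.dual_update t ht).1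

lemma qh_mem (h : IsPDGDRun T L C η ρ K r G qf qh lam ℓ) : ∀ t ∈ Icc 1 (T + 1), qh t ∈ K t :=
  mem_of_succ_mem h.qh_one fun t ht => (h.primal_update t ht).1

lemma sqdist_qh_le (h : IsPDGDRun T L C η ρ K r G qf qh lam ℓ) :
    ∀ t ∈ Icc 1 (T + 1), sqdist (qh t) qf ≤ 2 * L := fun t ht => by
  obtain ⟨hq, hqL⟩ := h.subset t ht (h.qh_mem t ht)
  obtain ⟨hf, hfL⟩ := h.subset t ht (h.feasible_mem t ht)
  linarith [sqdist_le_sum_add_sum hq hf]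

lemma abs_transpose_mulVec_le (h : IsPDGDRun T L C η ρ K r G qf qh lam ℓ) :
    ∀ t ∈ Icc 1 T, ∀ i, |((G t)ᵀ *ᵥ qh t) i| ≤ L := fun t ht i => by
  have ht' : t ∈ Icc 1 (T + 1) := Icc_subset_Icc_right (by omega) ht
  obtain ⟨hq, hqL⟩ := h.subset t ht' (h.qh_mem t ht')
  calc |((G t)ᵀ *ᵥ qh t) i| ≤ l1 (qh t) :=
        abs_mulVec_le_l1 (fun i j => h.abs_constraint_le_one t ht j i) _ i
    _ = ∑ j, qh t j := l1_eq_sum_of_nonneg fun j => (hq j).1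
    _ ≤ L := hqL

lemma abs_loss_le (h : IsPDGDRun T L C η ρ K r G qf qh lam ℓ) :
    ∀ t ∈ Icc 1 T, ∀ j, |ℓ t j| ≤ l1 (lam t) + 1 := fun t ht j => by
  rw [h.loss_eq t ht]
  obtain ⟨hr0, hr1⟩ := h.reward_mem t ht j
  exact (abs_sub _ _).trans (add_le_add (abs_mulVec_le_l1 (h.abs_constraint_le_one t ht) _ j)
    ((abs_of_nonneg hr0).trans_le hr1))

lemma intervalMax_le_of_l2_le (h : IsPDGDRun T L C η ρ K r G qf qh lam ℓ) {B : ℝ} :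
    ∀ u ∈ Icc 1 T, (∀ τ ∈ Icc 1 u, l2 (lam τ) ≤ B) → intervalMax ℓ 1 u ≤ √m * B + 1 := by
  intro u hu hB
  refine intervalMax_le (mem_Icc.1 hu).1 fun τ hτ1 hτu => ?_
  have hτ : τ ∈ Icc 1 T := mem_Icc.2 ⟨hτ1, hτu.trans (mem_Icc.1 hu).2⟩
  have hl1 : l1 (lam τ) ≤ √m * B := (l1_le_sqrt_card_mul_l2 _).trans
    (mul_le_mul_of_nonneg_left (hB τ (mem_Icc.2 ⟨hτ1, hτu⟩)) (Real.sqrt_nonneg _))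
  exact Real.iSup_le (fun j => (h.abs_loss_le τ hτ j).trans (by linarith))
    (by linarith [l1_nonneg (lam τ)])

lemma l2_succ_le (h : IsPDGDRun T L C η ρ K r G qf qh lam ℓ) (hη : 0 ≤ η) (hL : 0 ≤ L) :
    ∀ t ∈ Icc 1 T, l2 (lam (t + 1)) ≤ l2 (lam t) + η * (√m * L) := fun t ht =>
  ((h.dual_update t ht).l2_le_add (convex_setOf_forall_mem_Icc _ _)
    (fun _ => ⟨le_rfl, by positivity⟩) hη).trans
    ((add_le_add_iff_left _).2 (mul_le_mul_of_nonneg_left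
      (l2_le_sqrt_card_mul (h.abs_transpose_mulVec_le t ht) hL) hη))

lemma l2_sq_succ_le (h : IsPDGDRun T L C η ρ K r G qf qh lam ℓ) (hη : 0 ≤ η) (hC : 0 < C) :
    ∀ t ∈ Icc 1 T, l2 (lam (t + 1)) ^ 2 ≤ l2 (lam t) ^ 2
      + η * C * √T * intervalMax ℓ 1 t * (sqdist (qh t) qf - sqdist (qh (t + 1)) qf)
      + η * d / (C * √T) * intervalMax ℓ 1 t - 2 * η * ρ * l1 (lam t)
      + (2 * η * L + η ^ 2 * (m * L ^ 2)) := by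
  intro t ht
  obtain ⟨ht1, htT⟩ := mem_Icc.1 ht
  have ht' : t ∈ Icc 1 (T + 1) := mem_Icc.2 ⟨ht1, by omega⟩
  have ht'' : t + 1 ∈ Icc 1 (T + 1) := mem_Icc.2 ⟨by omega, by omega⟩
  have hM := h.intervalMax_pos t ht
  have hT : 0 < √(T : ℝ) := Real.sqrt_pos.2 (by exact_mod_cast (by omega : 0 < T))
  obtain ⟨hq, hqL⟩ := h.subset t ht' (h.qh_mem t ht')
  have hqf := (h.subset t ht' (h.feasible_mem t ht')).1
  have hdual := (h.dual_update t ht).l2_sq_le (convex_setOf_forall_mem_Icc _ _)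
    (fun _ => ⟨le_rfl, by positivity⟩)
  have hlag := dotp_transpose_mulVec_le (fun i => (h.lam_mem t ht' i).1) (h.reward_mem t ht)
    (fun j => (hq j).1) hqL (fun j => (hqf j).1) (h.feasible t ht)
  rw [← h.loss_eq t ht] at hlag
  have hprimal := (h.primal_update t ht).two_mul_dotp_le (h.convex _ ht'')
    (by positivity) (h.feasible_mem _ ht'')
  have hℓ : (∑ j, ℓ t j ^ 2) / (intervalMax ℓ 1 t * C * √T)
      ≤ d / (C * √T) * intervalMax ℓ 1 t := by
    rw [div_le_iff₀ (by positivity)]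
    calc ∑ j, ℓ t j ^ 2 ≤ d * intervalMax ℓ 1 t ^ 2 := sum_sq_le_card_mul_sq fun j =>
          (abs_le_linf _ j).trans (le_intervalMax ht1 le_rfl)
      _ = d / (C * √T) * intervalMax ℓ 1 t * (intervalMax ℓ 1 t * C * √T) := by field_simp
  have hg : l2 ((G t)ᵀ *ᵥ qh t) ^ 2 ≤ m * L ^ 2 := by
    rw [l2_sq]; exact sum_sq_le_card_mul_sq (h.abs_transpose_mulVec_le t ht)
  have e1 := mul_le_mul_of_nonneg_left hlag hη
  have e2 := mul_le_mul_of_nonneg_left hprimal hη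
  have e3 := mul_le_mul_of_nonneg_left hℓ hη
  have e4 := mul_le_mul_of_nonneg_left hg (sq_nonneg η)
  ring_nf at e1 e2 e3 e4 hdual ⊢
  linarith

theorem l2_le (h : IsPDGDRun T L C η ρ K r G qf qh lam ℓ) (hT : 1 ≤ T) (hm : 1 ≤ m)
    (hLd : L ≤ d) (hρ0 : 0 < ρ) (hρL : ρ ≤ L) (hC : C = 5 * d / L) (hη : 0 ≤ η)
    (hηT : η * m * d * √T ≤ 1 / 100) :
    ∀ t ∈ Icc 1 (T + 1), l2 (lam t) ≤ 20 * √m * L ^ 2 / ρ ^ 2 := by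
  have hL : 0 < L := hρ0.trans_le hρL
  have hC0 : 0 < C := by rw [hC]; exact div_pos (by linarith) hL
  have hB := twenty_mul_sqrt_le (m := m) hρ0 hρL
  have hρB := twenty_mul_le hm hρ0 hρL
  set B := 20 * √m * L ^ 2 / ρ ^ 2
  have hm1 : (1 : ℝ) ≤ m := by exact_mod_cast hm
  have hsm : 1 ≤ √(m : ℝ) := Real.one_le_sqrt.2 hm1
  have hsT : 1 ≤ √(T : ℝ) := Real.one_le_sqrt.2 (by exact_mod_cast hT)
  have hε : η * d * √T * √m ≤ 1 / 100 := by
    nlinarith [mul_le_mul_of_nonneg_left (Real.sqrt_le_self_iff.2 (Or.inr hm1))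
      (by positivity : 0 ≤ η * d * √T)]
  have hε1 : η * d * √T ≤ 1 / 100 := by
    nlinarith [mul_le_mul_of_nonneg_left hsm (by positivity : 0 ≤ η * d * √T)]
  have hηL : η * L ≤ η * d * √T := by
    nlinarith [mul_le_mul_of_nonneg_left hLd hη, mul_le_mul_of_nonneg_left hsT
      (by positivity : 0 ≤ η * d)]
  have hηmL : η * m * L ≤ 1 / 100 := by
    nlinarith [mul_le_mul_of_nonneg_left hηL (by positivity : (0 : ℝ) ≤ m)]
  refine forall_le_of_drift (α := η * C * √T) (β := η * d / (C * √T)) (c := 2 * η * ρ)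
    (κ := 2 * η * L + η ^ 2 * (m * L ^ 2)) (R := 2 * L) (μ := √m * B + 1)
    (N := fun τ => l1 (lam τ)) (M := intervalMax ℓ 1) (D := fun τ => sqdist (qh τ) qf)
    (by positivity) (by positivity) (by positivity) (by positivity) (by positivity) ?_ ?_
    (fun τ => l2_nonneg _) (by simp [l2, h.lam_one]) (fun τ _ => l2_le_l1 _)
    (fun τ hτ => (h.intervalMax_pos τ hτ).le) (monotoneOn_intervalMax.mono Set.Icc_subset_Ici_self)
    h.intervalMax_le_of_l2_le (fun τ hτ => ⟨sqdist_nonneg _ _, h.sqdist_qh_le τ hτ⟩)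
    (fun τ hτ => (h.l2_succ_le hη hL.le τ hτ).trans
      (by nlinarith [mul_le_mul_of_nonneg_left (hηL.trans hε1) (Real.sqrt_nonneg m)]))
    (h.l2_sq_succ_le hη hC0)
  · nlinarith [mul_le_mul_of_nonneg_left hρB hη,
      mul_le_mul_of_nonneg_left hηmL (mul_nonneg hη hL.le)]
  · calc (2 * L * (η * C * √T) + T * (η * d / (C * √T))) * (√m * B + 1)
        ≤ 11 * (η * d * √T) * (√m * B + 1) :=
          mul_le_mul_of_nonneg_right (two_mul_mul_add_mul_le hT hL hLd hC hη) (by positivity)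
      _ ≤ 3 * B ^ 2 / 4 := by
        nlinarith [mul_le_mul_of_nonneg_right hε (by positivity : 0 ≤ B)]

end IsPDGDRun

theorem stmt8_general {d m T : ℕ} (hm : 1 ≤ m) (hd : 1 ≤ d)
    (L : ℝ) (hLd : L ≤ d)
    (δ : ℝ) (hδ0 : 0 < δ) (hδ1 : δ < 1)
    (C η : ℝ) (hC : C = 5 * d / L)
    (hη : η = 1 / (100 * m * d * Real.sqrt (T * Real.log ((T : ℝ) ^ 2 / δ))))
    (ρ : ℝ) (hρ0 : 0 < ρ) (hρL : ρ ≤ L)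
    (K : ℕ → Set (Fin d → ℝ))
    (hKcv : ∀ t ∈ Finset.Icc 1 (T + 1), Convex ℝ (K t))
    (hKsub : ∀ t ∈ Finset.Icc 1 (T + 1),
      K t ⊆ {q : Fin d → ℝ | (∀ j, 0 ≤ q j ∧ q j ≤ 1) ∧ ∑ j, q j ≤ L})
    (r : ℕ → Fin d → ℝ) (hr : ∀ t ∈ Finset.Icc 1 T, ∀ j, r t j ∈ Set.Icc (0 : ℝ) 1)
    (G : ℕ → Matrix (Fin d) (Fin m) ℝ)
    (hG : ∀ t ∈ Finset.Icc 1 T, ∀ j i, |G t j i| ≤ 1)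
    (qfeas : Fin d → ℝ) (hqfeasK : ∀ t ∈ Finset.Icc 1 (T + 1), qfeas ∈ K t)
    (hqfeas : ∀ t ∈ Finset.Icc 1 T, ∀ i, ((G t)ᵀ *ᵥ qfeas) i ≤ -ρ)
    (qh : ℕ → Fin d → ℝ) (lam : ℕ → Fin m → ℝ)
    (hqh1 : qh 1 ∈ K 1) (hlam1 : ∀ i, lam 1 i = 0)
    (ℓ : ℕ → Fin d → ℝ)
    (hℓ : ∀ t ∈ Finset.Icc 1 T, ℓ t = fun j => (G t *ᵥ lam t) j - r t j)
    (hpos : ∀ t ∈ Finset.Icc 1 T, 0 < intervalMax ℓ 1 t)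
    (hqupd : ∀ t ∈ Finset.Icc 1 T,
      IsEuclidProj (K (t + 1))
        (fun j => qh t j - (1 / (intervalMax ℓ 1 t * C * Real.sqrt T)) * ℓ t j)
        (qh (t + 1)))
    (hlupd : ∀ t ∈ Finset.Icc 1 T,
      IsEuclidProj {l : Fin m → ℝ | ∀ i, l i ∈ Set.Icc (0 : ℝ) ((T : ℝ) ^ ((1 : ℝ) / 4))}
        (fun i => lam t i + η * ((G t)ᵀ *ᵥ qh t) i) (lam (t + 1))) :
    ∀ t ∈ Finset.Icc 1 (T + 1), l1 (lam t) ≤ 20 * m * L ^ 2 / ρ ^ 2 := by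
  have run : IsPDGDRun T L C η ρ K r G qfeas qh lam ℓ :=
    ⟨hKcv, hKsub, hr, hG, hqfeasK, hqfeas, hqh1, hlam1, hℓ, hpos, hqupd, hlupd⟩
  intro t ht
  rcases le_or_gt T 1 with hT | hT
  · have hbox : ∀ i, |lam t i| ≤ 1 := fun i => by
      obtain ⟨h0, h1⟩ := run.lam_mem t ht i
      exact (abs_of_nonneg h0).trans_le
        (h1.trans (Real.rpow_le_one (Nat.cast_nonneg T) (by exact_mod_cast hT) (by norm_num)))
    calc l1 (lam t) ≤ m * 1 := l1_le_card_mul hbox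
      _ ≤ 20 * m * L ^ 2 / ρ ^ 2 := by
        rw [le_div_iff₀ (by positivity)]; nlinarith [mul_le_mul hρL hρL hρ0.le (hρ0.le.trans hρL)]
  · have hη0 : 0 ≤ η := by rw [hη]; positivity
    have hl2 := run.l2_le (by omega) hm hLd hρ0 hρL hC hη0
      (dualStep_mul_sqrt_le hm hd hT hδ0 hδ1 hη) t ht
    calc l1 (lam t) ≤ √m * l2 (lam t) := l1_le_sqrt_card_mul_l2 _
      _ ≤ √m * (20 * √m * L ^ 2 / ρ ^ 2) := mul_le_mul_of_nonneg_left hl2 (Real.sqrt_nonneg _)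
      _ = 20 * m * L ^ 2 / ρ ^ 2 := by
        rw [mul_div_assoc', ← mul_assoc, mul_left_comm, Real.mul_self_sqrt (Nat.cast_nonneg m)]

/-- Deterministic (adversarial-constraint) Lagrange-multiplier bound for PDGD-OPS:
under the feasibility condition `ρ ≥ T^{-1/8} L √(20m)`, the iterates satisfy
`‖λ_t‖₁ ≤ 20mL²/ρ²` for every `t`. -/
theorem stmt8 {d m T : ℕ} (hT : 1 ≤ T) (hm : 1 ≤ m) (hd : 1 ≤ d)
    (L : ℝ) (hL1 : 1 ≤ L) (hLd : L ≤ d)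
    (δ : ℝ) (hδ0 : 0 < δ) (hδ1 : δ < 1)
    (C η : ℝ) (hC : C = 5 * d / L)
    (hη : η = 1 / (100 * m * d * Real.sqrt (T * Real.log ((T : ℝ) ^ 2 / δ))))
    (ρ : ℝ) (hρ0 : 0 < ρ) (hρL : ρ ≤ L)
    (hρcond : ρ ≥ (T : ℝ) ^ (-(1 / 8 : ℝ)) * L * Real.sqrt (20 * m))
    (K : ℕ → Set (Fin d → ℝ))
    (hKne : ∀ t ∈ Finset.Icc 1 (T + 1), (K t).Nonempty)
    (hKcl : ∀ t ∈ Finset.Icc 1 (T + 1), IsClosed (K t))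
    (hKcv : ∀ t ∈ Finset.Icc 1 (T + 1), Convex ℝ (K t))
    (hKsub : ∀ t ∈ Finset.Icc 1 (T + 1),
      K t ⊆ {q : Fin d → ℝ | (∀ j, 0 ≤ q j ∧ q j ≤ 1) ∧ ∑ j, q j ≤ L})
    (r : ℕ → Fin d → ℝ) (hr : ∀ t ∈ Finset.Icc 1 T, ∀ j, r t j ∈ Set.Icc (0 : ℝ) 1)
    (G : ℕ → Matrix (Fin d) (Fin m) ℝ)
    (hG : ∀ t ∈ Finset.Icc 1 T, ∀ j i, |G t j i| ≤ 1)
    (qfeas : Fin d → ℝ) (hqfeasK : ∀ t ∈ Finset.Icc 1 (T + 1), qfeas ∈ K t)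
    (hqfeas : ∀ t ∈ Finset.Icc 1 T, ∀ i, ((G t)ᵀ *ᵥ qfeas) i ≤ -ρ)
    (qh : ℕ → Fin d → ℝ) (lam : ℕ → Fin m → ℝ)
    (hqh1 : qh 1 ∈ K 1) (hlam1 : ∀ i, lam 1 i = 0)
    (ℓ : ℕ → Fin d → ℝ)
    (hℓ : ∀ t ∈ Finset.Icc 1 T, ℓ t = fun j => (G t *ᵥ lam t) j - r t j)
    (hpos : ∀ t ∈ Finset.Icc 1 T, 0 < intervalMax ℓ 1 t)
    (hqupd : ∀ t ∈ Finset.Icc 1 T,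
      IsEuclidProj (K (t + 1))
        (fun j => qh t j - (1 / (intervalMax ℓ 1 t * C * Real.sqrt T)) * ℓ t j)
        (qh (t + 1)))
    (hlupd : ∀ t ∈ Finset.Icc 1 T,
      IsEuclidProj {l : Fin m → ℝ | ∀ i, l i ∈ Set.Icc (0 : ℝ) ((T : ℝ) ^ ((1 : ℝ) / 4))}
        (fun i => lam t i + η * ((G t)ᵀ *ᵥ qh t) i) (lam (t + 1))) :
    ∀ t ∈ Finset.Icc 1 (T + 1), l1 (lam t) ≤ 20 * m * L ^ 2 / ρ ^ 2 :=
  stmt8_general hm hd L hLd δ hδ0 hδ1 C η hC hη ρ hρ0 hρL K hKcv hKsub r hr G hG qfeas hqfeasK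
    hqfeas qh lam hqh1 hlam1 ℓ hℓ hpos hqupd hlupd
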